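/- Any two C² solutions on [1,∞) of Legendre's equation (1−x²)P''(x) − 2xP'(x) + ρ(ρ+1)P(x) = 0 are proportional; consequently every such solution is a scalar multiple of P_ρ(x) = (1/2π)∫₀^{2π}(x + √(x²−1)cos θ)^ρ dθ. -/

import Mathlib

open scoped Real

noncomputable section

/-- Laplace's integral `P_ρ(x) = (1/2π) ∫₀^{2π} (x + √(x²−1) cos θ)^ρ dθ`. -/
def laplaceP (ρ : ℝ) (x : ℝ) : ℝ :=
  (1 / (2 * π)) * ∫ θ in (0 : ℝ)..(2 * π), (x + Real.sqrt (x ^ 2 - 1) * Real.cos θ) ^ ρ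

/-!
Legendre's equation is the Sturm–Liouville equation `((1 - x²) P')' + ρ(ρ+1) P = 0`. For two
solutions `u`, `v` the Wronskian `(1 - x²)(u v' - v u')` is constant on `(1, ∞)`; if both are
continuous at `1` and their fluxes `(1 - x²) u'`, `(1 - x²) v'` vanish there, the Wronskian
vanishes, so `u / v` is constant wherever `v ≠ 0`. A `C²` solution on `[1, ∞)` has vanishing flux
at `1` trivially. Laplace's integral is a positive solution: with `A = x + √(x²-1) cos θ`, the
Legendre operator applied to `A ^ ρ` is the `θ`-derivative of `-ρ sin θ A^(ρ-1) / √(x²-1)`, which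
integrates to zero over a period, and its flux `(1 - x²) ∂ₓ(A ^ ρ)` carries a factor `√(x²-1)`.
-/

open Set Filter Topology Function Real MeasureTheory

namespace intervalIntegral

variable {E : Type*} [NormedAddCommGroup E] [NormedSpace ℝ E]

theorem continuousOn_parametric_of_continuousOn {X : Type*} [TopologicalSpace X]
    {f : X → ℝ → E} {s : Set X} (hf : ContinuousOn (uncurry f) (s ×ˢ univ)) (a b : ℝ) :
    ContinuousOn (fun x ↦ ∫ t in a..b, f x t) s := by
  rw [continuousOn_iff_continuous_domRestrict]
  have hf' : Continuous (uncurry fun (x : s) t ↦ f x t) :=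
    hf.comp_continuous (f := fun p : s × ℝ ↦ ((p.1 : X), p.2)) (by fun_prop)
      fun p ↦ ⟨p.1.2, mem_univ _⟩
  exact continuous_parametric_intervalIntegral_of_continuous' hf' a b

theorem hasDerivAt_integral_of_continuousOn {𝕜 : Type*} [RCLike 𝕜] [NormedSpace 𝕜 E]
    {f f' : 𝕜 → ℝ → E} {U : Set 𝕜} (hU : IsOpen U) {x₀ : 𝕜} (hx₀ : x₀ ∈ U)
    (hf : ContinuousOn (uncurry f) (U ×ˢ univ)) (hf' : ContinuousOn (uncurry f') (U ×ˢ univ))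
    (hderiv : ∀ x ∈ U, ∀ t, HasDerivAt (f · t) (f' x t) x) (a b : ℝ) :
    HasDerivAt (fun x ↦ ∫ t in a..b, f x t) (∫ t in a..b, f' x₀ t) x₀ := by
  have slice {g : 𝕜 → ℝ → E} (hg : ContinuousOn (uncurry g) (U ×ˢ univ)) {x : 𝕜}
      (hx : x ∈ U) : Continuous (g x) :=
    continuousOn_univ.1 (hg.uncurry_left x hx)
  obtain ⟨δ, hδ, hball⟩ := Metric.isOpen_iff.1 hU x₀ hx₀
  have hclosed : Metric.closedBall x₀ (δ / 2) ⊆ U :=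
    (Metric.closedBall_subset_ball (half_lt_self hδ)).trans hball
  obtain ⟨C, hC⟩ := ((ProperSpace.isCompact_closedBall x₀ (δ / 2)).prod
    (isCompact_uIcc (a := a) (b := b))).exists_bound_of_continuousOn
    (hf'.mono (prod_mono hclosed (subset_univ _)))
  refine (hasDerivAt_integral_of_dominated_loc_of_deriv_le (bound := fun _ ↦ C)
    (Metric.closedBall_mem_nhds x₀ (half_pos hδ)) ?_ ((slice hf hx₀).intervalIntegrable a b)
    (slice hf' hx₀).aestronglyMeasurable ?_ intervalIntegrable_const ?_).2
  · filter_upwards [hU.mem_nhds hx₀] with x hx using (slice hf hx).aestronglyMeasurable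
  · exact Eventually.of_forall fun t ht x hx ↦ hC (x, t) ⟨hx, uIoc_subset_uIcc ht⟩
  · exact Eventually.of_forall fun t _ x hx ↦ hderiv x (hclosed hx) t

end intervalIntegral

section ConstOfDerivZero

variable {E : Type*} [NormedAddCommGroup E] [NormedSpace ℝ E] {a : ℝ} {f : ℝ → E}

theorem exists_eq_const_of_hasDerivAt_zero (hf : ∀ x ∈ Ioi a, HasDerivAt f 0 x) :
    ∃ c, ∀ x ∈ Ioi a, f x = c :=
  isOpen_Ioi.exists_is_const_of_deriv_eq_zero isPreconnected_Ioi
    (fun x hx ↦ (hf x hx).differentiableAt.differentiableWithinAt) fun x hx ↦ (hf x hx).deriv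

theorem eq_of_hasDerivAt_zero_of_tendsto {L : E} (hf : ∀ x ∈ Ioi a, HasDerivAt f 0 x)
    (hfa : Tendsto f (𝓝[>] a) (𝓝 L)) : ∀ x ∈ Ioi a, f x = L := by
  obtain ⟨c, hc⟩ := exists_eq_const_of_hasDerivAt_zero hf
  have hc' : Tendsto f (𝓝[>] a) (𝓝 c) :=
    tendsto_const_nhds.congr' (eventually_nhdsWithin_of_forall fun x hx ↦ (hc x hx).symm)
  rw [tendsto_nhds_unique hfa hc']
  exact hc

end ConstOfDerivZero

/-- `(u, U)` and `(v, V)` solve `y' = Y / p`, `Y' = -q y`, the first-order form of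
`(p y')' + q y = 0` with flux `Y = p y'`. -/
theorem exists_eq_const_mul_of_flux_tendsto_zero {a : ℝ} {p q u v U V : ℝ → ℝ}
    (hu : ∀ x ∈ Ioi a, HasDerivAt u (U x / p x) x)
    (hU : ∀ x ∈ Ioi a, HasDerivAt U (-(q x * u x)) x)
    (hv : ∀ x ∈ Ioi a, HasDerivAt v (V x / p x) x)
    (hV : ∀ x ∈ Ioi a, HasDerivAt V (-(q x * v x)) x) (hv₀ : ∀ x ∈ Ioi a, v x ≠ 0)
    (hua : ContinuousWithinAt u (Ici a) a) (hva : ContinuousWithinAt v (Ici a) a)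
    (hUa : Tendsto U (𝓝[>] a) (𝓝 0)) (hVa : Tendsto V (𝓝[>] a) (𝓝 0)) :
    ∃ c, ∀ x ∈ Ici a, u x = c * v x := by
  have hua' := hua.tendsto.mono_left (nhdsWithin_mono a Ioi_subset_Ici_self)
  have hva' := hva.tendsto.mono_left (nhdsWithin_mono a Ioi_subset_Ici_self)
  have wronskian_eq_zero : ∀ x ∈ Ioi a, u x * V x - v x * U x = 0 := by
    refine eq_of_hasDerivAt_zero_of_tendsto (fun x hx ↦ ?_) ?_
    · refine (((hu x hx).mul (hV x hx)).sub ((hv x hx).mul (hU x hx))).congr_deriv ?_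
      ring
    · simpa using (hua'.mul hVa).sub (hva'.mul hUa)
  obtain ⟨c, hc⟩ := exists_eq_const_of_hasDerivAt_zero (f := u / v) fun x hx ↦ by
    refine ((hu x hx).div (hv x hx) (hv₀ x hx)).congr_deriv ?_
    rw [div_eq_zero_iff]
    left
    linear_combination (-(p x)⁻¹) * wronskian_eq_zero x hx
  have hIoi : ∀ x ∈ Ioi a, u x = c * v x := fun x hx ↦ by
    rw [← hc x hx, Pi.div_apply, div_mul_cancel₀ _ (hv₀ x hx)]
  refine ⟨c, fun x hx ↦ ?_⟩
  rcases (mem_Ici.1 hx).eq_or_lt with rfl | hx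
  · exact tendsto_nhds_unique hua'
      ((hva'.const_mul c).congr' (eventually_nhdsWithin_of_forall fun y hy ↦ (hIoi y hy).symm))
  · exact hIoi x hx

section Laplace

def laplaceBase (x θ : ℝ) : ℝ := x + √(x ^ 2 - 1) * cos θ

/-- `(1 - x²) ∂ₓ (laplaceBase x θ ^ ρ)`, written so that it is visibly continuous, and zero,
at `x = 1`. -/
def laplaceFlux (ρ x θ : ℝ) : ℝ :=
  -ρ * laplaceBase x θ ^ (ρ - 1) * (√(x ^ 2 - 1) * (√(x ^ 2 - 1) + x * cos θ))

def laplaceAngularFlux (ρ x θ : ℝ) : ℝ :=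
  -ρ * sin θ * laplaceBase x θ ^ (ρ - 1) / √(x ^ 2 - 1)

def laplaceAngularFluxDeriv (ρ x θ : ℝ) : ℝ :=
  ρ * (ρ - 1) * sin θ ^ 2 * laplaceBase x θ ^ (ρ - 2)
    - ρ * cos θ * laplaceBase x θ ^ (ρ - 1) / √(x ^ 2 - 1)

def laplacePFlux (ρ x : ℝ) : ℝ :=
  (1 / (2 * π)) * ∫ θ in (0 : ℝ)..(2 * π), laplaceFlux ρ x θ

variable {ρ x : ℝ}

theorem sq_sqrt_sq_sub_one (hx : 1 ≤ x) : √(x ^ 2 - 1) ^ 2 = x ^ 2 - 1 :=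
  sq_sqrt (by nlinarith)

theorem sqrt_sq_sub_one_pos (hx : 1 < x) : 0 < √(x ^ 2 - 1) :=
  sqrt_pos.2 (by nlinarith)

theorem laplaceBase_pos (hx : 1 ≤ x) (θ : ℝ) : 0 < laplaceBase x θ := by
  have hs := sq_sqrt_sq_sub_one hx
  have hs₀ := sqrt_nonneg (x ^ 2 - 1)
  have hlt : √(x ^ 2 - 1) < x := by nlinarith
  have hcos := neg_one_le_cos θ
  unfold laplaceBase
  nlinarith

theorem continuous_laplaceBase : Continuous (uncurry laplaceBase) := by
  unfold laplaceBase
  fun_prop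

theorem continuousOn_laplaceBase_rpow (ρ : ℝ) :
    ContinuousOn (uncurry fun x θ ↦ laplaceBase x θ ^ ρ) (Ici 1 ×ˢ univ) :=
  continuous_laplaceBase.continuousOn.rpow_const fun _ hp ↦ Or.inl (laplaceBase_pos hp.1 _).ne'

theorem continuousOn_laplaceFlux (ρ : ℝ) :
    ContinuousOn (uncurry (laplaceFlux ρ)) (Ici 1 ×ˢ univ) := by
  have := continuousOn_laplaceBase_rpow (ρ - 1)
  unfold laplaceFlux uncurry at *
  fun_prop

theorem continuousOn_laplaceAngularFluxDeriv (ρ : ℝ) :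
    ContinuousOn (uncurry (laplaceAngularFluxDeriv ρ)) (Ioi 1 ×ˢ univ) := by
  have hIoi : Ioi (1 : ℝ) ×ˢ (univ : Set ℝ) ⊆ Ici 1 ×ˢ univ :=
    prod_mono Ioi_subset_Ici_self subset_rfl
  have := (continuousOn_laplaceBase_rpow (ρ - 1)).mono hIoi
  have := (continuousOn_laplaceBase_rpow (ρ - 2)).mono hIoi
  have : ∀ p ∈ Ioi (1 : ℝ) ×ˢ (univ : Set ℝ), √(p.1 ^ 2 - 1) ≠ 0 :=
    fun p hp ↦ (sqrt_sq_sub_one_pos hp.1).ne'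
  unfold laplaceAngularFluxDeriv uncurry at *
  fun_prop (disch := assumption)

theorem hasDerivAt_sqrt_sq_sub_one (hx : 1 < x) :
    HasDerivAt (fun y ↦ √(y ^ 2 - 1)) (x / √(x ^ 2 - 1)) x := by
  have hx₀ : x ^ 2 - 1 ≠ 0 := by nlinarith
  refine (((hasDerivAt_pow 2 x).sub_const 1).sqrt hx₀).congr_deriv ?_
  have := (sqrt_sq_sub_one_pos hx).ne'
  field_simp
  norm_num

theorem hasDerivAt_laplaceBase (hx : 1 < x) (θ : ℝ) :
    HasDerivAt (laplaceBase · θ) (1 + x * cos θ / √(x ^ 2 - 1)) x :=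
  ((hasDerivAt_id x).add ((hasDerivAt_sqrt_sq_sub_one hx).mul_const (cos θ))).congr_deriv
    (by ring)

theorem hasDerivAt_laplaceBase_rpow (hx : 1 < x) (θ : ℝ) :
    HasDerivAt (fun y ↦ laplaceBase y θ ^ ρ) (laplaceFlux ρ x θ / (1 - x ^ 2)) x := by
  refine ((hasDerivAt_laplaceBase hx θ).rpow_const
    (Or.inl (laplaceBase_pos hx.le θ).ne')).congr_deriv ?_
  have hs := sq_sqrt_sq_sub_one hx.le
  have hs₀ := (sqrt_sq_sub_one_pos hx).ne'
  have hx₀ : 1 - x ^ 2 ≠ 0 := by nlinarith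
  unfold laplaceFlux
  field_simp
  linear_combination (√(x ^ 2 - 1) + x * cos θ) * ρ * laplaceBase x θ ^ (ρ - 1) * hs

theorem hasDerivAt_laplaceAngularFlux (hx : 1 < x) (θ : ℝ) :
    HasDerivAt (laplaceAngularFlux ρ x) (laplaceAngularFluxDeriv ρ x θ) θ := by
  have hA : HasDerivAt (laplaceBase x) (-(√(x ^ 2 - 1) * sin θ)) θ :=
    ((hasDerivAt_cos θ).const_mul _).const_add x |>.congr_deriv (by ring)
  have hApow := hA.rpow_const (p := ρ - 1) (Or.inl (laplaceBase_pos hx.le θ).ne')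
  refine ((((hasDerivAt_sin θ).const_mul (-ρ)).mul hApow).div_const
    (√(x ^ 2 - 1))).congr_deriv ?_
  have hs₀ := (sqrt_sq_sub_one_pos hx).ne'
  rw [show ρ - 1 - 1 = ρ - 2 by ring]
  unfold laplaceAngularFluxDeriv
  field_simp
  ring

/-- With `hasDerivAt_laplaceAngularFlux`: the Legendre operator applied to `laplaceBase x θ ^ ρ`
is the `θ`-derivative of `laplaceAngularFlux ρ x`. -/
theorem hasDerivAt_laplaceFlux (hx : 1 < x) (θ : ℝ) :
    HasDerivAt (laplaceFlux ρ · θ)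
      (laplaceAngularFluxDeriv ρ x θ - ρ * (ρ + 1) * laplaceBase x θ ^ ρ) x := by
  have hApow := (hasDerivAt_laplaceBase hx θ).rpow_const (p := ρ - 1)
    (Or.inl (laplaceBase_pos hx.le θ).ne')
  have hsqrt := hasDerivAt_sqrt_sq_sub_one hx
  refine ((hApow.const_mul (-ρ)).mul (hsqrt.mul (hsqrt.add
    ((hasDerivAt_id x).mul_const (cos θ))))).congr_deriv ?_
  have hs := sq_sqrt_sq_sub_one hx.le
  have hs₀ := (sqrt_sq_sub_one_pos hx).ne'
  have hpow₁ : laplaceBase x θ ^ (ρ - 1) = laplaceBase x θ ^ (ρ - 2) * laplaceBase x θ := by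
    rw [← rpow_add_one (laplaceBase_pos hx.le θ).ne']
    ring_nf
  have hpow₀ : laplaceBase x θ ^ ρ = laplaceBase x θ ^ (ρ - 2) * laplaceBase x θ ^ 2 := by
    rw [← rpow_natCast, ← rpow_add (laplaceBase_pos hx.le θ)]
    ring_nf
  unfold laplaceAngularFluxDeriv
  rw [show ρ - 1 - 1 = ρ - 2 by ring, hpow₁, hpow₀, laplaceBase]
  simp only [Pi.mul_apply, Pi.add_apply, id_eq]
  field_simp
  -- with `A = laplaceBase x θ`, both `A² - (√(x²-1) + x cos θ)² - sin² θ` and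
  -- `A - x ∂ₓA + cos θ / √(x²-1)` vanish
  linear_combination ρ * (x + cos θ * √(x ^ 2 - 1)) ^ (ρ - 2) *
    (((x + cos θ * √(x ^ 2 - 1)) * cos θ - (ρ - 1) * √(x ^ 2 - 1) * (1 - cos θ ^ 2)) * hs
      - (ρ - 1) * √(x ^ 2 - 1) * sin_sq_add_cos_sq θ)

theorem laplaceP_pos (hx : 1 ≤ x) : 0 < laplaceP ρ x := by
  have hcont : Continuous fun θ ↦ laplaceBase x θ ^ ρ :=
    continuousOn_univ.1 ((continuousOn_laplaceBase_rpow ρ).uncurry_left x hx)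
  have hint : 0 < ∫ θ in (0 : ℝ)..(2 * π), laplaceBase x θ ^ ρ :=
    intervalIntegral.intervalIntegral_pos_of_pos_on (hcont.intervalIntegrable _ _)
      (fun θ _ ↦ rpow_pos_of_pos (laplaceBase_pos hx θ) ρ) (by positivity)
  exact mul_pos (by positivity) hint

theorem continuousOn_laplaceP (ρ : ℝ) : ContinuousOn (laplaceP ρ) (Ici 1) :=
  continuousOn_const.mul <| intervalIntegral.continuousOn_parametric_of_continuousOn
    (continuousOn_laplaceBase_rpow ρ) _ _

theorem tendsto_laplacePFlux (ρ : ℝ) : Tendsto (laplacePFlux ρ) (𝓝[>] 1) (𝓝 0) := by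
  have hcont : ContinuousWithinAt (laplacePFlux ρ) (Ici 1) 1 :=
    continuousOn_const.mul (intervalIntegral.continuousOn_parametric_of_continuousOn
      (continuousOn_laplaceFlux ρ) _ _) 1 self_mem_Ici
  have h₁ : laplacePFlux ρ 1 = 0 := by simp [laplacePFlux, laplaceFlux]
  rw [← h₁]
  exact hcont.tendsto.mono_left (nhdsWithin_mono 1 Ioi_subset_Ici_self)

theorem hasDerivAt_laplaceP (hx : 1 < x) :
    HasDerivAt (laplaceP ρ) (laplacePFlux ρ x / (1 - x ^ 2)) x := by
  have hflux :
      ContinuousOn (uncurry fun y θ ↦ laplaceFlux ρ y θ / (1 - y ^ 2)) (Ioi 1 ×ˢ univ) :=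
    ((continuousOn_laplaceFlux ρ).mono (prod_mono Ioi_subset_Ici_self subset_rfl)).div
      (by fun_prop) fun p hp ↦ by nlinarith [mem_Ioi.1 hp.1]
  refine ((intervalIntegral.hasDerivAt_integral_of_continuousOn isOpen_Ioi hx
    ((continuousOn_laplaceBase_rpow ρ).mono (prod_mono Ioi_subset_Ici_self subset_rfl)) hflux
    (fun y hy θ ↦ hasDerivAt_laplaceBase_rpow hy θ) _ _).const_mul (1 / (2 * π))).congr_deriv
    ?_
  rw [intervalIntegral.integral_div, laplacePFlux]
  ring

theorem hasDerivAt_laplacePFlux (hx : 1 < x) :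
    HasDerivAt (laplacePFlux ρ) (-(ρ * (ρ + 1) * laplaceP ρ x)) x := by
  have hIoi : Ioi (1 : ℝ) ×ˢ (univ : Set ℝ) ⊆ Ici 1 ×ˢ univ :=
    prod_mono Ioi_subset_Ici_self subset_rfl
  have hF := (continuousOn_laplaceBase_rpow ρ).mono hIoi
  have hD := continuousOn_laplaceAngularFluxDeriv ρ
  have hslice {g : ℝ → ℝ → ℝ} (hg : ContinuousOn (uncurry g) (Ioi 1 ×ˢ univ)) :
      IntervalIntegrable (g x) volume 0 (2 * π) :=
    (continuousOn_univ.1 (hg.uncurry_left x hx)).intervalIntegrable _ _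
  have hperiod : ∫ θ in (0 : ℝ)..(2 * π), laplaceAngularFluxDeriv ρ x θ = 0 := by
    rw [intervalIntegral.integral_eq_sub_of_hasDerivAt
      (fun θ _ ↦ hasDerivAt_laplaceAngularFlux hx θ) (hslice hD)]
    simp [laplaceAngularFlux]
  have hD' : ContinuousOn (uncurry fun y θ ↦
      laplaceAngularFluxDeriv ρ y θ - ρ * (ρ + 1) * laplaceBase y θ ^ ρ) (Ioi 1 ×ˢ univ) :=
    hD.sub (continuousOn_const.mul hF)
  refine ((intervalIntegral.hasDerivAt_integral_of_continuousOn isOpen_Ioi hx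
    ((continuousOn_laplaceFlux ρ).mono hIoi) hD'
    (fun y hy θ ↦ hasDerivAt_laplaceFlux hy θ) _ _).const_mul (1 / (2 * π))).congr_deriv ?_
  rw [intervalIntegral.integral_sub (hslice hD) ((hslice hF).const_mul _),
    intervalIntegral.integral_const_mul, hperiod, laplaceP]
  simp only [laplaceBase]
  ring

end Laplace

/-- Every C² solution on `[1,∞)` of Legendre's equation
`(1−x²)P'' − 2xP' + ρ(ρ+1)P = 0` (one-sided derivatives at 1) is a scalar
multiple of Laplace's integral `P_ρ`. -/
theorem legendre_solution_eq_laplace (ρ : ℝ) (P : ℝ → ℝ)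
    (hs : ContDiffOn ℝ 2 P (Set.Ici 1))
    (hode : ∀ x ∈ Set.Ici (1 : ℝ),
      (1 - x ^ 2) * derivWithin (derivWithin P (Set.Ici 1)) (Set.Ici 1) x
        - 2 * x * derivWithin P (Set.Ici 1) x + ρ * (ρ + 1) * P x = 0) :
    ∃ c : ℝ, ∀ x ∈ Set.Ici (1 : ℝ), P x = c * laplaceP ρ x := by
  set P' := derivWithin P (Ici 1)
  have hP' : ContDiffOn ℝ 1 P' (Ici 1) := hs.derivWithin (uniqueDiffOn_Ici 1) le_rfl
  have hasDerivAt_of_contDiffOn {f : ℝ → ℝ} (hf : ContDiffOn ℝ 1 f (Ici 1)) {x : ℝ}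
      (hx : x ∈ Ioi 1) : HasDerivAt f (derivWithin f (Ici 1) x) x :=
    (hf.differentiableOn one_ne_zero x (le_of_lt hx)).hasDerivWithinAt.hasDerivAt (Ici_mem_nhds hx)
  have hflux : Tendsto (fun x ↦ (1 - x ^ 2) * P' x) (𝓝[>] 1) (𝓝 0) := by
    have : ContinuousWithinAt (fun x ↦ (1 - x ^ 2) * P' x) (Ici 1) 1 :=
      ((continuousOn_const.sub (continuousOn_pow 2)).mul hP'.continuousOn) 1 self_mem_Ici
    simpa using this.tendsto.mono_left (nhdsWithin_mono 1 Ioi_subset_Ici_self)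
  refine exists_eq_const_mul_of_flux_tendsto_zero (p := fun x ↦ 1 - x ^ 2)
    (q := fun _ ↦ ρ * (ρ + 1)) (fun x hx ↦ ?_) (fun x hx ↦ ?_)
    (fun x hx ↦ hasDerivAt_laplaceP hx) (fun x hx ↦ hasDerivAt_laplacePFlux hx)
    (fun x hx ↦ (laplaceP_pos (le_of_lt hx)).ne') (hs.continuousOn 1 self_mem_Ici)
    (continuousOn_laplaceP ρ 1 self_mem_Ici) hflux (tendsto_laplacePFlux ρ)
  · have hx₀ : 1 - x ^ 2 ≠ 0 := by nlinarith [mem_Ioi.1 hx]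
    rw [mul_div_cancel_left₀ _ hx₀]
    exact hasDerivAt_of_contDiffOn (hs.of_le one_le_two) hx
  · refine (((hasDerivAt_pow 2 x).const_sub 1).mul
      (hasDerivAt_of_contDiffOn hP' hx)).congr_deriv ?_
    linear_combination hode x (mem_Ici.2 (le_of_lt hx))
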